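/- Let d ≥ 7 be an integer. There exists a constant C = C(d) > 0 such that for all v, w ∈ ℤ^d: the function x ↦ ⟨v−x⟩^(6−2d) · ⟨x−w⟩^(2−d) is summable over ℤ^d and ∑'_{x ∈ ℤ^d} ⟨v−x⟩^(6−2d) · ⟨x−w⟩^(2−d) ≤ C · ⟨v−w⟩^(2−d). -/

import Mathlib

/-- Euclidean norm of a lattice point of `ℤ^d`. -/
noncomputable def euclNorm {d : ℕ} (x : Fin d → ℤ) : ℝ :=
  Real.sqrt (∑ i, ((x i : ℝ)) ^ 2)

/-- The "Japanese bracket" `⟨x⟩ = ‖x‖ + 1`. -/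
noncomputable def jap {d : ℕ} (x : Fin d → ℤ) : ℝ := euclNorm x + 1

/-- Sup norm of a lattice point of `ℤ^d`. -/
noncomputable def supNorm {d : ℕ} (x : Fin d → ℤ) : ℝ :=
  ((Finset.univ.sup (fun i => (x i).natAbs) : ℕ) : ℝ)

/-- The sup-norm box `B_y(M)` of radius `M` centred at `y`. -/
def latBox {d : ℕ} (y : Fin d → ℤ) (M : ℝ) : Set (Fin d → ℤ) :=
  {x | supNorm (x - y) ≤ M}

/-- The inner vertex boundary `∂B_y(M)` of the box `B_y(M)`. -/
def latBdry {d : ℕ} (y : Fin d → ℤ) (M : ℝ) : Set (Fin d → ℤ) :=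
  {x | x ∈ latBox y M ∧ ∃ x', x' ∉ latBox y M ∧ (∑ i, |x i - x' i|) = 1}

/-!
Write `a = ⟨v - x⟩`, `b = ⟨x - w⟩`, `c = ⟨v - w⟩`, so that `c ≤ a + b` and one of `a`, `b` is at
least `c / 2`. For exponents `q ≤ p ≤ 0` this gives the pointwise bound
`a ^ q * b ^ p ≤ (c / 2) ^ p * (a ^ q + b ^ q)`, and summing over `x` both `∑ a ^ q` and `∑ b ^ q`
are translates of the lattice sum `∑ ⟨x⟩ ^ q`, which converges as soon as `q < -d`.
The theorem is the case `q = 6 - 2d`, `p = 2 - d`.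
-/

open Real

section Real

variable {a b c p q : ℝ}

lemma rpow_sub_mul_rpow_le_add (ha : 0 < a) (hb : 0 < b) (hqp : q ≤ p) (hp : p ≤ 0) :
    a ^ (q - p) * b ^ p ≤ a ^ q + b ^ q := by
  rcases le_total a b with hab | hba
  · calc a ^ (q - p) * b ^ p ≤ a ^ (q - p) * a ^ p :=
          mul_le_mul_of_nonneg_left (rpow_le_rpow_of_nonpos ha hab hp) (by positivity)
      _ = a ^ q := by rw [← rpow_add ha, sub_add_cancel]
      _ ≤ a ^ q + b ^ q := le_add_of_nonneg_right (by positivity)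
  · calc a ^ (q - p) * b ^ p ≤ b ^ (q - p) * b ^ p :=
          mul_le_mul_of_nonneg_right (rpow_le_rpow_of_nonpos hb hba (by linarith)) (by positivity)
      _ = b ^ q := by rw [← rpow_add hb, sub_add_cancel]
      _ ≤ a ^ q + b ^ q := le_add_of_nonneg_left (by positivity)

lemma rpow_mul_rpow_le_of_le_add (ha : 0 < a) (hb : 0 < b) (hc : 0 < c) (habc : c ≤ a + b)
    (hqp : q ≤ p) (hp : p ≤ 0) :
    a ^ q * b ^ p ≤ (c / 2) ^ p * (a ^ q + b ^ q) := by
  rcases le_total (c / 2) a with hca | hca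
  · calc a ^ q * b ^ p = a ^ p * (a ^ (q - p) * b ^ p) := by
          rw [← mul_assoc, ← rpow_add ha, add_sub_cancel]
      _ ≤ (c / 2) ^ p * (a ^ q + b ^ q) :=
          mul_le_mul (rpow_le_rpow_of_nonpos (by positivity) hca hp)
            (rpow_sub_mul_rpow_le_add ha hb hqp hp) (by positivity) (by positivity)
  · have hcb : c / 2 ≤ b := by linarith
    calc a ^ q * b ^ p ≤ a ^ q * (c / 2) ^ p :=
          mul_le_mul_of_nonneg_left (rpow_le_rpow_of_nonpos (by positivity) hcb hp) (by positivity)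
      _ ≤ (c / 2) ^ p * (a ^ q + b ^ q) := by
          rw [mul_comm]
          exact mul_le_mul_of_nonneg_left (le_add_of_nonneg_right (by positivity)) (by positivity)

end Real

section Lattice

variable {d : ℕ}

noncomputable def latticeToEuclidean : (Fin d → ℤ) →+ EuclideanSpace ℝ (Fin d) :=
  AddMonoidHom.mk' (fun x => WithLp.toLp 2 fun i => (x i : ℝ)) fun x y => by ext i; simp

lemma latticeToEuclidean_apply (x : Fin d → ℤ) (i : Fin d) : latticeToEuclidean x i = x i := rfl

lemma latticeToEuclidean_injective : Function.Injective (latticeToEuclidean (d := d)) :=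
  fun x y h => funext fun i => by
    simpa [latticeToEuclidean_apply] using congrArg (fun z : EuclideanSpace ℝ (Fin d) => z i) h

lemma euclNorm_eq_norm (x : Fin d → ℤ) : euclNorm x = ‖latticeToEuclidean x‖ := by
  simp [euclNorm, latticeToEuclidean, EuclideanSpace.norm_eq]

lemma jap_eq (x : Fin d → ℤ) : jap x = ‖latticeToEuclidean x‖ + 1 := by
  rw [jap, euclNorm_eq_norm]

lemma jap_pos (x : Fin d → ℤ) : 0 < jap x := by
  rw [jap_eq]; positivity

lemma jap_sub_le_add (u v w : Fin d → ℤ) : jap (u - w) ≤ jap (u - v) + jap (v - w) := by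
  simp only [jap_eq, map_sub]
  linarith [norm_sub_le_norm_sub_add_norm_sub (latticeToEuclidean u) (latticeToEuclidean v)
    (latticeToEuclidean w), norm_nonneg (latticeToEuclidean v - latticeToEuclidean w)]

lemma latticeToEuclidean_mem_span (x : Fin d → ℤ) :
    latticeToEuclidean x ∈
      Submodule.span ℤ (Set.range (EuclideanSpace.basisFun (Fin d) ℝ).toBasis) := by
  rw [Module.Basis.mem_span_iff_repr_mem]
  exact fun i => ⟨x i, rfl⟩

lemma summable_jap_rpow {r : ℝ} (hr : r < -d) : Summable fun x : Fin d → ℤ => jap x ^ r := by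
  set L := Submodule.span ℤ (Set.range (EuclideanSpace.basisFun (Fin d) ℝ).toBasis)
  have hrank : Module.finrank ℤ L = d := by
    rw [ZLattice.rank ℝ L, finrank_euclideanSpace_fin]
  have hL : Summable fun z : L => ‖z‖ ^ r := ZLattice.summable_norm_rpow L r (by rwa [hrank])
  have hinj : Function.Injective fun x : Fin d → ℤ =>
      (⟨latticeToEuclidean x, latticeToEuclidean_mem_span x⟩ : L) :=
    fun x y h => latticeToEuclidean_injective (congrArg Subtype.val h)
  -- The comparison fails only at `x = 0`, where `‖0‖ ^ r = 0` is a junk value.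
  refine Summable.of_norm_bounded_eventually (hL.comp_injective hinj) ?_
  filter_upwards [Set.Finite.compl_mem_cofinite (Set.finite_singleton 0)] with x hx
  have hx0 : 0 < ‖latticeToEuclidean x‖ :=
    norm_pos_iff.2 ((map_ne_zero_iff _ latticeToEuclidean_injective).2 hx)
  rw [Real.norm_of_nonneg (rpow_nonneg (jap_pos x).le r), jap_eq]
  exact rpow_le_rpow_of_nonpos hx0 (le_add_of_nonneg_right zero_le_one) (by linarith)

end Lattice

theorem exists_tsum_jap_rpow_mul_jap_rpow_le {d : ℕ} {p q : ℝ} (hq : q < -d) (hqp : q ≤ p)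
    (hp : p ≤ 0) :
    ∃ C : ℝ, 0 < C ∧ ∀ v w : Fin d → ℤ,
      Summable (fun x : Fin d → ℤ => jap (v - x) ^ q * jap (x - w) ^ p) ∧
        ∑' x : Fin d → ℤ, jap (v - x) ^ q * jap (x - w) ^ p ≤ C * jap (v - w) ^ p := by
  have hS := summable_jap_rpow hq
  set S := ∑' x : Fin d → ℤ, jap x ^ q
  have hS_pos : 0 < S := hS.tsum_pos (fun x => rpow_nonneg (jap_pos x).le q) 0
    (rpow_pos_of_pos (jap_pos 0) q)
  refine ⟨2 ^ (-p) * (2 * S), by positivity, fun v w => ?_⟩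
  have hv : HasSum (fun x => jap (v - x) ^ q) S := (Equiv.subLeft v).hasSum_iff.2 hS.hasSum
  have hw : HasSum (fun x => jap (x - w) ^ q) S := (Equiv.subRight w).hasSum_iff.2 hS.hasSum
  have hmajorant := (hv.add hw).mul_left ((jap (v - w) / 2) ^ p)
  have hle : ∀ x, jap (v - x) ^ q * jap (x - w) ^ p ≤
      (jap (v - w) / 2) ^ p * (jap (v - x) ^ q + jap (x - w) ^ q) := fun x =>
    rpow_mul_rpow_le_of_le_add (jap_pos _) (jap_pos _) (jap_pos _) (jap_sub_le_add v x w) hqp hp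
  have hsum : Summable fun x => jap (v - x) ^ q * jap (x - w) ^ p :=
    hmajorant.summable.of_nonneg_of_le
      (fun x => mul_nonneg (rpow_nonneg (jap_pos _).le q) (rpow_nonneg (jap_pos _).le p)) hle
  refine ⟨hsum, (hasSum_le hle hsum.hasSum hmajorant).trans_eq ?_⟩
  rw [div_rpow (jap_pos _).le zero_le_two, rpow_neg zero_le_two]
  ring

theorem stmt13 (d : ℕ) (hd : 7 ≤ d) :
    ∃ C : ℝ, 0 < C ∧
      ∀ v w : Fin d → ℤ,
        Summable (fun x : Fin d → ℤ =>
            jap (v - x) ^ (6 - 2 * (d : ℝ)) * jap (x - w) ^ (2 - (d : ℝ))) ∧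
          (∑' x : Fin d → ℤ, jap (v - x) ^ (6 - 2 * (d : ℝ)) * jap (x - w) ^ (2 - (d : ℝ))) ≤
            C * jap (v - w) ^ (2 - (d : ℝ)) := by
  have hd' : (7 : ℝ) ≤ d := by exact_mod_cast hd
  exact exists_tsum_jap_rpow_mul_jap_rpow_le (by linarith) (by linarith) (by linarith)
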